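/- arXiv:1705.09939 — 4 statements merged into one kernel-verified Lean document; each statement's English description precedes it below -/
import Mathlib

section
/- If F is a long-tailed distribution (i.e., for every real y, the tail satisfies F̄(x+y) ~ F̄(x) as x → ∞), then there exists a function h : [0,∞) → [0,∞) such that h(x) → ∞, h(x)/x → 0 (eventually nonincreasing), and F̄(x − h(x)) ~ F̄(x) as x → ∞. -/
open MeasureTheory ProbabilityTheory Filter Topology Set

/-- The (right) tail function of a measure on `ℝ`. -/
noncomputable def tail (μ : MeasureTheory.Measure ℝ) (x : ℝ) : ℝ := (μ (Set.Ioi x)).toReal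

/-- A distribution is long-tailed if `F̄(x+y) ~ F̄(x)` for every `y`. -/
def LongTailed (μ : MeasureTheory.Measure ℝ) : Prop :=
  (∀ x : ℝ, 0 < μ (Set.Ioi x)) ∧
  ∀ y : ℝ, Filter.Tendsto (fun x => tail μ (x + y) / tail μ x) Filter.atTop (nhds 1)

/-- A distribution supported on `[0,∞)` is subexponential if `F̄^{*2}(x) ~ 2 F̄(x)`. -/
def Subexponential (μ : MeasureTheory.Measure ℝ) : Prop :=
  (∀ x : ℝ, 0 < μ (Set.Ioi x)) ∧ μ (Set.Iio 0) = 0 ∧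
  Filter.Tendsto (fun x => tail (μ.conv μ) x / tail μ x) Filter.atTop (nhds 2)

/-- Membership in the class `H(F)` of insensitivity functions of a long-tailed `F`. -/
structure MemH (μ : MeasureTheory.Measure ℝ) (h : ℝ → ℝ) : Prop where
  nonneg : ∀ x, 0 ≤ x → 0 ≤ h x
  mono : MonotoneOn h (Set.Ici 0)
  tendsto_atTop : Filter.Tendsto h Filter.atTop Filter.atTop
  ratio_anti : AntitoneOn (fun x => h x / x) (Set.Ioi 0)
  ratio_zero : Filter.Tendsto (fun x => h x / x) Filter.atTop (nhds 0)
  tail_insensitive :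
    Filter.Tendsto (fun x => tail μ (x - h x) / tail μ x) Filter.atTop (nhds 1)


private lemma tail_anti' (μ : MeasureTheory.Measure ℝ) [MeasureTheory.IsProbabilityMeasure μ] :
    Antitone (tail μ) :=
  fun _ _ hxy => ENNReal.toReal_mono (measure_ne_top μ _) (measure_mono (Set.Ioi_subset_Ioi hxy))

private lemma tail_pos' (μ : MeasureTheory.Measure ℝ) [MeasureTheory.IsProbabilityMeasure μ]
    (h : ∀ x : ℝ, 0 < μ (Set.Ioi x)) (x : ℝ) : 0 < tail μ x :=
  ENNReal.toReal_pos (h x).ne' (measure_ne_top μ _)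

/-- If F is long-tailed, the class H(F) is nonempty. -/
theorem longTailed_exists_memH (μ : MeasureTheory.Measure ℝ)
    [MeasureTheory.IsProbabilityMeasure μ] (hL : LongTailed μ) :
    ∃ h : ℝ → ℝ, MemH μ h := by
  obtain ⟨hpos, hlim⟩ := hL
  have tpos : ∀ x, 0 < tail μ x := tail_pos' μ hpos
  have tanti : Antitone (tail μ) := tail_anti' μ
  -- thresholds
  have hthr : ∀ m : ℕ, ∃ T : ℝ, ∀ x ≥ T,
      tail μ (x - ((m:ℝ)+1)) ≤ (1 + ((m:ℝ)+1)⁻¹) * tail μ x := by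
    intro m
    have h1 : (1:ℝ) < 1 + ((m:ℝ)+1)⁻¹ := by
      have : (0:ℝ) < ((m:ℝ)+1)⁻¹ := by positivity
      linarith
    have h2 := (hlim (-((m:ℝ)+1))).eventually (eventually_le_nhds h1)
    rw [eventually_atTop] at h2
    obtain ⟨T, hT⟩ := h2
    refine ⟨T, fun x hx => ?_⟩
    have h3 := hT x hx
    rw [div_le_iff₀ (tpos x)] at h3
    calc tail μ (x - ((m:ℝ)+1)) = tail μ (x + -((m:ℝ)+1)) := by ring_nf
    _ ≤ (1 + ((m:ℝ)+1)⁻¹) * tail μ x := h3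
  choose T hT using hthr
  -- the sequence of nodes
  set c : ℕ → ℝ := fun n => Nat.rec 0 (fun n cn => max (2*cn+1) (T (n+1))) n with hcdef
  have hc0 : c 0 = 0 := rfl
  have hcs : ∀ n, c (n+1) = max (2*c n+1) (T (n+1)) := fun n => rfl
  clear_value c
  have hstep : ∀ n, 2 * c n + 1 ≤ c (n+1) := fun n => (hcs n) ▸ le_max_left _ _
  have hcT : ∀ n, T (n+1) ≤ c (n+1) := fun n => (hcs n) ▸ le_max_right _ _
  have cge : ∀ n : ℕ, (n:ℝ) ≤ c n := by
    intro n; induction n with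
    | zero => simp [hc0]
    | succ n ih => have := hstep n; push_cast; push_cast at ih; nlinarith [Nat.cast_nonneg (α := ℝ) n]
  have cnn : ∀ n, 0 ≤ c n := fun n => le_trans (Nat.cast_nonneg n) (cge n)
  have cmono : Monotone c := monotone_nat_of_le_succ (fun n => by nlinarith [hstep n, cnn n])
  have ggap : ∀ n, c n + 1 ≤ c (n+1) - c n := fun n => by nlinarith [hstep n]
  have gpos : ∀ n, (0:ℝ) < c (n+1) - c n := fun n => by nlinarith [ggap n, cnn n]
  have gmono : ∀ j m, j ≤ m → c (j+1) - c j ≤ c (m+1) - c m := by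
    intro j m hjm
    rcases eq_or_lt_of_le hjm with rfl | hlt
    · exact le_refl _
    · have h1 : c (j+1) ≤ c m := cmono hlt
      have := ggap m; have := cnn j; linarith
  -- node inequalities
  have nodeA : ∀ k m : ℕ, k ≤ m → c m - c k ≤ ((m:ℝ) - k) * (c (m+1) - c m) := by
    intro k m hkm
    induction m, hkm using Nat.le_induction with
    | base => simp
    | succ m hkm ih =>
      have h1 : c (m+1) - c m ≤ c (m+2) - c (m+1) := gmono m (m+1) (by omega)
      have h2 : (k:ℝ) ≤ m := by exact_mod_cast hkm
      push_cast
      nlinarith [gpos m, gpos (m+1)]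
  have nodeB : ∀ k m : ℕ, m ≤ k → ((k:ℝ) - m) * (c (m+1) - c m) ≤ c k - c m := by
    intro k m hmk
    induction k, hmk using Nat.le_induction with
    | base => simp
    | succ k hmk ih =>
      have h1 : c (m+1) - c m ≤ c (k+1) - c k := gmono m k hmk
      push_cast
      nlinarith
  -- the lines
  set L : ℕ → ℝ → ℝ := fun m x => (m:ℝ) + (x - c m) / (c (m+1) - c m) with hLdef
  clear_value L
  have nodeGe : ∀ m k : ℕ, (k:ℝ) ≤ L m (c k) := by
    intro m k
    rcases le_total k m with hkm | hmk
    · have := nodeA k m hkm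
      have hg := gpos m
      simp only [hLdef]
      have h1 : (c m - c k) / (c (m+1) - c m) ≤ (m:ℝ) - k := by
        rw [div_le_iff₀ hg]; exact this
      have h2 : (c k - c m) / (c (m+1) - c m) = -((c m - c k) / (c (m+1) - c m)) := by ring
      linarith
    · have := nodeB k m hmk
      have hg := gpos m
      simp only [hLdef]
      have h1 : (k:ℝ) - m ≤ (c k - c m) / (c (m+1) - c m) := by
        rw [le_div_iff₀ hg]; exact this
      linarith
  have Lmono : ∀ m, Monotone (L m) := by
    intro m x y hxy
    simp only [hLdef]
    have hg := gpos m
    have : (x - c m) / (c (m+1) - c m) ≤ (y - c m) / (c (m+1) - c m) := by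
      gcongr
    linarith
  -- the function
  set h : ℝ → ℝ := fun x => ⨅ m, L m (max x 0) with hhdef
  have Lnn : ∀ m (x : ℝ), 0 ≤ x → 0 ≤ L m x := by
    intro m x hx
    have h0 : (0:ℝ) ≤ L m (c 0) := by exact_mod_cast nodeGe m 0
    rw [hc0] at h0
    exact h0.trans (Lmono m hx)
  have bdd : ∀ x : ℝ, BddBelow (Set.range fun m => L m (max x 0)) := by
    intro x
    exact ⟨0, by rintro _ ⟨m, rfl⟩; exact Lnn m _ (le_max_right x 0)⟩
  have hnn : ∀ x, 0 ≤ h x := fun x => le_ciInf fun m => Lnn m _ (le_max_right x 0)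
  have hle : ∀ (x : ℝ) (m : ℕ), 0 ≤ x → h x ≤ L m x := by
    intro x m hx
    exact (ciInf_le (bdd x) m).trans_eq (by rw [max_eq_left hx])
  have hmono : Monotone h := by
    intro x y hxy
    exact le_ciInf fun m => (ciInf_le (bdd x) m).trans (Lmono m (max_le_max hxy le_rfl))
  have hgen : ∀ (n : ℕ) (x : ℝ), c n ≤ x → (n:ℝ) ≤ h x := by
    intro n x hx
    refine le_ciInf fun m => (nodeGe m n).trans (Lmono m ?_)
    exact le_max_of_le_left hx
  -- affine form
  have Lform : ∀ (m : ℕ) (x : ℝ), L m x = L m 0 + x / (c (m+1) - c m) := by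
    intro m x
    have hg := (gpos m).ne'
    simp only [hLdef]
    field_simp
    ring
  have ann : ∀ m : ℕ, 0 ≤ L m 0 := fun m => Lnn m 0 le_rfl
  -- ratio antitone
  have ranti : AntitoneOn (fun x => h x / x) (Set.Ioi 0) := by
    intro x hx y hy hxy
    have hx' : (0:ℝ) < x := hx
    have hy' : (0:ℝ) < y := hy
    simp only
    rw [div_le_div_iff₀ hy' hx']
    have key : ∀ m : ℕ, h y * x ≤ L m x * y := by
      intro m
      have h1 : h y ≤ L m y := hle y m hy'.le
      have h2 : L m y * x ≤ L m x * y := by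
        rw [Lform m x, Lform m y]
        have hg := gpos m
        have e : (L m 0 + y / (c (m+1) - c m)) * x = L m 0 * x + y * x / (c (m+1) - c m) := by ring
        have e2 : (L m 0 + x / (c (m+1) - c m)) * y = L m 0 * y + y * x / (c (m+1) - c m) := by ring
        rw [e, e2]
        have h9 : L m 0 * x ≤ L m 0 * y := mul_le_mul_of_nonneg_left hxy (ann m)
        linarith
      calc h y * x ≤ L m y * x := mul_le_mul_of_nonneg_right h1 hx'.le
      _ ≤ L m x * y := h2
    have hle2 : h y * x / y ≤ h x := by
      refine le_ciInf fun m => ?_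
      rw [max_eq_left hx'.le, div_le_iff₀ hy']
      exact key m
    rw [div_le_iff₀ hy'] at hle2
    linarith
  -- ratio tends to zero
  have rzero : Tendsto (fun x => h x / x) atTop (𝓝 0) := by
    rw [Metric.tendsto_atTop]
    intro ε hε
    obtain ⟨n, hn⟩ := exists_nat_gt (2/ε)
    refine ⟨max 1 ((L n 0 + 1) * (2/ε)), fun x hx => ?_⟩
    have hx1 : (1:ℝ) ≤ x := le_trans (le_max_left _ _) hx
    have hx0 : (0:ℝ) < x := lt_of_lt_of_le one_pos hx1
    have hg := gpos n
    have hgn : (n:ℝ)+1 ≤ c (n+1) - c n := le_trans (by linarith [cge n]) (ggap n)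
    have hub : h x ≤ L n 0 + x * (c (n+1) - c n)⁻¹ := by
      have := (hle x n hx0.le).trans_eq (Lform n x)
      rwa [div_eq_mul_inv] at this
    have hinv : (c (n+1) - c n)⁻¹ < ε/2 := by
      have hn2 : 2 < (n:ℝ) * ε := (div_lt_iff₀ hε).1 hn
      have hgg : 2/ε < c (n+1) - c n := by
        rw [div_lt_iff₀ hε]
        nlinarith
      nlinarith [mul_inv_cancel₀ hg.ne', inv_nonneg.2 hg.le, (div_pos two_pos hε)]
    have h1 : L n 0 / x ≤ ε/2 := by
      rw [div_le_iff₀ hx0]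
      have h2 : (L n 0 + 1) * (2/ε) ≤ x := le_trans (le_max_right _ _) hx
      have h5 : ε/2 * ((L n 0 + 1) * (2/ε)) = L n 0 + 1 := by field_simp
      nlinarith [ann n, mul_le_mul_of_nonneg_left h2 (le_of_lt (half_pos hε))]
    have hfin : h x / x < ε := by
      rw [div_lt_iff₀ hx0]
      have e : L n 0 / x * x = L n 0 := by field_simp
      nlinarith [hnn x]
    rw [Real.dist_eq, sub_zero, abs_of_nonneg (div_nonneg (hnn x) hx0.le)]
    exact hfin
  -- tendsto atTop
  have htop : Tendsto h atTop atTop := by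
    rw [tendsto_atTop]
    intro b
    obtain ⟨n, hn⟩ := exists_nat_ge b
    rw [eventually_atTop]
    exact ⟨c n, fun x hx => le_trans hn (hgen n x hx)⟩
  -- localization
  have hloc : ∀ (n : ℕ) (x : ℝ), c n ≤ x → ∃ m : ℕ, n ≤ m ∧ c m ≤ x ∧ x < c (m+1) := by
    intro n x hx
    have hex : ∃ k : ℕ, x < c k := by
      obtain ⟨k, hk⟩ := exists_nat_gt x
      exact ⟨k, hk.trans_le (cge k)⟩
    classical
    have hk0 : x < c (Nat.find hex) := Nat.find_spec hex
    have hnf : n < Nat.find hex := by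
      by_contra hcon
      push_neg at hcon
      exact absurd (hk0.trans_le (cmono hcon)) (not_lt.2 hx)
    obtain ⟨m, hm⟩ : ∃ m, Nat.find hex = m + 1 := ⟨Nat.find hex - 1, by omega⟩
    refine ⟨m, by omega, ?_, by rw [← hm]; exact hk0⟩
    exact not_lt.1 (Nat.find_min hex (by omega : m < Nat.find hex))
  -- tail insensitivity
  have hins : Tendsto (fun x => tail μ (x - h x) / tail μ x) atTop (𝓝 1) := by
    rw [Metric.tendsto_atTop]
    intro ε hε
    obtain ⟨N, hN⟩ := exists_nat_gt (1/ε)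
    refine ⟨c (N+1), fun x hx => ?_⟩
    obtain ⟨m, hmN, hml, hmr⟩ := hloc (N+1) x hx
    obtain ⟨n, rfl⟩ : ∃ n, m = n + 1 := ⟨m-1, by omega⟩
    have hx0 : (0:ℝ) ≤ x := (cnn (n+1)).trans hml
    have hub : h x ≤ (n:ℝ) + 2 := by
      have h1 : h x ≤ L (n+1) x := hle x (n+1) hx0
      have h2 : L (n+1) x ≤ L (n+1) (c (n+2)) := Lmono _ hmr.le
      have h3 : L (n+1) (c (n+2)) = (n:ℝ) + 2 := by
        simp only [hLdef]
        rw [div_self (gpos (n+1)).ne']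
        push_cast; ring
      calc h x ≤ L (n+1) (c (n+2)) := h1.trans h2
      _ = (n:ℝ)+2 := h3
    have hlow : tail μ x ≤ tail μ (x - h x) := tanti (by linarith [hnn x])
    have hupp : tail μ (x - h x) ≤ (1 + ((n:ℝ)+2)⁻¹) * tail μ x := by
      have h1 : tail μ (x - h x) ≤ tail μ (x - ((n:ℝ)+2)) := tanti (by linarith)
      have h2 := hT (n+1) x (le_trans (hcT n) hml)
      have e : x - (((n+1:ℕ):ℝ) + 1) = x - ((n:ℝ) + 2) := by push_cast; ring
      have e2 : (1 + (((n+1:ℕ):ℝ) + 1)⁻¹) = 1 + ((n:ℝ)+2)⁻¹ := by push_cast; ring_nf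
      rw [e, e2] at h2
      exact h1.trans h2
    have ht := tpos x
    have hr1 : 1 ≤ tail μ (x - h x) / tail μ x := (one_le_div ht).2 hlow
    have hr2 : tail μ (x - h x) / tail μ x ≤ 1 + ((n:ℝ)+2)⁻¹ :=
      (div_le_iff₀ ht).2 (by linarith [hupp])
    have hnn2 : ((n:ℝ)+2)⁻¹ < ε := by
      have hNn : ((N:ℕ):ℝ) + 1 ≤ (n:ℝ) + 1 := by exact_mod_cast hmN
      have h4 : 1/ε < (n:ℝ)+2 := by linarith
      have h3 : (0:ℝ) < (n:ℝ)+2 := by positivity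
      rw [div_lt_iff₀ hε] at h4
      nlinarith [mul_inv_cancel₀ h3.ne', inv_nonneg.2 h3.le]
    rw [Real.dist_eq, abs_of_nonneg (by linarith)]
    linarith
  exact ⟨h, fun x _ => hnn x, hmono.monotoneOn _, htop, ranti, rzero, hins⟩
end

section
/- If F is both long-tailed and dominatedly varying tailed, then F is subexponential; that is, L ∩ D ⊂ S. -/
/-!
If `X + Y > x`, then either one summand exceeds `x - T`, or both exceed `T` and one of them
exceeds `x / 2`; hence `F̄*²(x) ≤ 2 F̄(x - T) + 2 F̄(T) F̄(x / 2)`. Long tails give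
`F̄(x - T) ~ F̄(x)` and dominated variation gives `F̄(x / 2) = O(F̄(x))`, so
`limsup F̄*²(x) / F̄(x) ≤ 2 + O(F̄(T))` for every `T`. Conversely `F̄*²(x) ≥ F̄(x) (2 - F̄(x))`
for every distribution on `[0, ∞)`.
-/

open MeasureTheory ProbabilityTheory Filter Topology Set

section Tail

variable {μ ν : Measure ℝ}

lemma tail_nonneg (x : ℝ) : 0 ≤ tail μ x := ENNReal.toReal_nonneg

lemma LongTailed.tail_pos [IsFiniteMeasure μ] (hL : LongTailed μ) (x : ℝ) : 0 < tail μ x :=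
  ENNReal.toReal_pos (hL.1 x).ne' (measure_ne_top _ _)

lemma antitone_tail [IsFiniteMeasure μ] : Antitone (tail μ) := fun _ _ hab =>
  measureReal_mono (Ioi_subset_Ioi hab)

lemma tail_add_measureReal_Iic [IsFiniteMeasure μ] (x : ℝ) :
    tail μ x + μ.real (Iic x) = μ.real univ := by
  rw [add_comm, tail, ← measureReal_def, ← compl_Iic]
  exact measureReal_add_measureReal_compl measurableSet_Iic

lemma tendsto_tail_atTop [IsFiniteMeasure μ] : Tendsto (tail μ) atTop (𝓝 0) := by
  have hIic : Tendsto (fun x => μ.real (Iic x)) atTop (𝓝 (μ.real univ)) :=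
    (ENNReal.tendsto_toReal (measure_ne_top μ univ)).comp (tendsto_measure_Iic_atTop μ)
  have h := (tendsto_const_nhds (x := μ.real univ)).sub hIic
  rw [sub_self] at h
  refine h.congr fun x => ?_
  linarith [tail_add_measureReal_Iic (μ := μ) x]

lemma tail_conv (x : ℝ) : tail (μ.conv ν) x = (μ.prod ν).real {p | x < p.1 + p.2} :=
  map_measureReal_apply measurable_add measurableSet_Ioi

lemma tail_conv_le [IsProbabilityMeasure μ] [IsProbabilityMeasure ν] (x T : ℝ) :
    tail (μ.conv ν) x ≤
      tail μ (x - T) + tail ν (x - T) +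
        (tail μ T * tail ν (x / 2) + tail μ (x / 2) * tail ν T) := by
  have hcover : {p : ℝ × ℝ | x < p.1 + p.2} ⊆
      (Ioi (x - T) ×ˢ univ ∪ univ ×ˢ Ioi (x - T)) ∪
        (Ioi T ×ˢ Ioi (x / 2) ∪ Ioi (x / 2) ×ˢ Ioi T) := by
    rintro ⟨a, b⟩ (hab : x < a + b)
    simp only [mem_union, mem_prod, mem_Ioi, mem_univ, and_true, true_and]
    by_cases ha : a ≤ T
    · exact Or.inl (Or.inr (by linarith))
    by_cases hb : b ≤ T
    · exact Or.inl (Or.inl (by linarith))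
    by_cases hb' : x / 2 < b
    · exact Or.inr (Or.inl ⟨not_le.1 ha, hb'⟩)
    · exact Or.inr (Or.inr ⟨by linarith, not_le.1 hb⟩)
  rw [tail_conv]
  refine (measureReal_mono hcover).trans ?_
  refine (measureReal_union_le _ _).trans (add_le_add ((measureReal_union_le _ _).trans ?_)
    ((measureReal_union_le _ _).trans ?_))
  all_goals simp only [measureReal_prod_prod, probReal_univ, mul_one, one_mul]; exact le_rfl

lemma measureReal_Ici_zero [IsProbabilityMeasure μ] (hμ : μ (Iio 0) = 0) : μ.real (Ici 0) = 1 := by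
  rw [← compl_Iio, probReal_compl_eq_one_sub measurableSet_Iio, measureReal_def, hμ]
  simp

lemma measureReal_Icc_zero [IsProbabilityMeasure μ] (hμ : μ (Iio 0) = 0) {x : ℝ} (hx : 0 ≤ x) :
    μ.real (Icc 0 x) = 1 - tail μ x := by
  rw [← measureReal_Ici_zero hμ, ← Icc_union_Ioi_eq_Ici hx,
    measureReal_union ((Iic_disjoint_Ioi le_rfl).mono_left Icc_subset_Iic_self) measurableSet_Ioi]
  simp [tail, measureReal_def]

lemma tail_add_mul_le_tail_conv [IsProbabilityMeasure μ] [IsProbabilityMeasure ν]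
    (hμ : μ (Iio 0) = 0) (hν : ν (Iio 0) = 0) {x : ℝ} (hx : 0 ≤ x) :
    tail μ x + (1 - tail μ x) * tail ν x ≤ tail (μ.conv ν) x := by
  have hsub : Ioi x ×ˢ Ici 0 ∪ Icc 0 x ×ˢ Ioi x ⊆ {p : ℝ × ℝ | x < p.1 + p.2} := by
    rintro ⟨a, b⟩ (⟨ha, hb⟩ | ⟨ha, hb⟩)
    · exact show x < a + b by simp only [mem_Ioi, mem_Ici] at ha hb; linarith
    · exact show x < a + b by simp only [mem_Icc, mem_Ioi] at ha hb; linarith [ha.1]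
  have hdisj : Disjoint (Ioi x ×ˢ Ici (0 : ℝ)) (Icc 0 x ×ˢ Ioi x) :=
    disjoint_prod.2 (Or.inl ((Iic_disjoint_Ioi le_rfl).mono_left Icc_subset_Iic_self).symm)
  rw [tail_conv]
  refine le_trans (le_of_eq ?_) (measureReal_mono hsub)
  rw [measureReal_union hdisj (measurableSet_Icc.prod measurableSet_Ioi),
    measureReal_prod_prod, measureReal_prod_prod, measureReal_Ici_zero hν,
    measureReal_Icc_zero hμ hx, mul_one]
  rfl

end Tail

open Asymptotics in
lemma Antitone.isBigO_comp_mul_of_isBigO_comp_mul {f : ℝ → ℝ} (hf : Antitone f)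
    (hf0 : ∀ x, 0 ≤ f x) {t : ℝ} (ht0 : 0 < t) (ht1 : t < 1)
    (hdom : (fun x => f (t * x)) =O[atTop] f) {s : ℝ} (hs : 0 < s) :
    (fun x => f (s * x)) =O[atTop] f := by
  have hpow : ∀ n : ℕ, (fun x => f (t ^ n * x)) =O[atTop] f := by
    intro n
    induction n with
    | zero => simpa using isBigO_refl f atTop
    | succ n ih =>
      have hcomp := ih.comp_tendsto (tendsto_id.const_mul_atTop ht0)
      refine (hcomp.trans hdom).congr_left fun x => ?_
      simp only [Function.comp_apply, id, pow_succ, mul_assoc]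
  obtain ⟨n, hn⟩ := exists_pow_lt_of_lt_one hs ht1
  refine IsBigO.trans ?_ (hpow n)
  refine IsBigO.of_bound' ?_
  filter_upwards [eventually_ge_atTop 0] with x hx
  rw [Real.norm_of_nonneg (hf0 _), Real.norm_of_nonneg (hf0 _)]
  exact hf (by gcongr)

section Subexponential

variable {μ : Measure ℝ} [IsProbabilityMeasure μ]

lemma eventually_lt_tail_conv_self_div (hμ : μ (Iio 0) = 0) (hpos : ∀ x, 0 < tail μ x) {a : ℝ}
    (ha : a < 2) : ∀ᶠ x in atTop, a < tail (μ.conv μ) x / tail μ x := by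
  filter_upwards [(tendsto_tail_atTop (μ := μ)).eventually_lt_const (sub_pos.2 ha),
    eventually_ge_atTop 0] with x hx hx0
  rw [lt_div_iff₀ (hpos x)]
  nlinarith [tail_add_mul_le_tail_conv hμ hμ hx0, mul_pos (sub_pos.2 hx) (hpos x)]

lemma eventually_tail_conv_self_div_lt (hL : LongTailed μ)
    (hhalf : (fun x => tail μ (x / 2)) =O[atTop] tail μ) {a : ℝ} (ha : 2 < a) :
    ∀ᶠ x in atTop, tail (μ.conv μ) x / tail μ x < a := by
  obtain ⟨C, hC⟩ := hhalf.bound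
  obtain ⟨δ, hδ0, rfl⟩ : ∃ δ > 0, a = 2 + 4 * δ := ⟨(a - 2) / 4, by linarith, by ring⟩
  obtain ⟨T, hT⟩ : ∃ T, C * tail μ T < δ :=
    ((tendsto_tail_atTop.const_mul C).eventually_lt_const (by rwa [mul_zero])).exists
  have hshift : Tendsto (fun x => tail μ (x - T) / tail μ x) atTop (𝓝 1) := by
    simpa only [sub_eq_add_neg] using hL.2 (-T)
  filter_upwards [hshift.eventually_lt_const (lt_add_of_pos_right 1 hδ0), hC] with x hx hxC
  have hx0 := hL.tail_pos x
  have hshift_le : tail μ (x - T) < (1 + δ) * tail μ x := (div_lt_iff₀ hx0).1 hx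
  have hhalf_le : tail μ T * tail μ (x / 2) ≤ δ * tail μ x := by
    rw [Real.norm_of_nonneg (tail_nonneg _), Real.norm_of_nonneg (tail_nonneg _)] at hxC
    calc tail μ T * tail μ (x / 2) ≤ tail μ T * (C * tail μ x) :=
          mul_le_mul_of_nonneg_left hxC (tail_nonneg T)
      _ = C * tail μ T * tail μ x := by ring
      _ ≤ δ * tail μ x := by gcongr
  rw [div_lt_iff₀ hx0]
  linarith [tail_conv_le (μ := μ) (ν := μ) x T]

lemma tendsto_tail_conv_self_div (hμ : μ (Iio 0) = 0) (hL : LongTailed μ)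
    (hhalf : (fun x => tail μ (x / 2)) =O[atTop] tail μ) :
    Tendsto (fun x => tail (μ.conv μ) x / tail μ x) atTop (𝓝 2) :=
  tendsto_order.2 ⟨fun _ ha => eventually_lt_tail_conv_self_div hμ hL.tail_pos ha,
    fun _ ha => eventually_tail_conv_self_div_lt hL hhalf ha⟩

end Subexponential

/-- A distribution on [0,∞) that is both long-tailed and of dominated variation
is subexponential: L ∩ D ⊂ S. -/
theorem longTailed_dominatedVarying_subexponential (μ : MeasureTheory.Measure ℝ)
    [MeasureTheory.IsProbabilityMeasure μ] (hsupp : μ (Set.Iio 0) = 0)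
    (hL : LongTailed μ)
    (hD : ∃ t : ℝ, 0 < t ∧ t < 1 ∧ ∃ C : ℝ, ∀ᶠ x in Filter.atTop,
      tail μ (t * x) ≤ C * tail μ x) :
    Subexponential μ := by
  obtain ⟨t, ht0, ht1, C, hC⟩ := hD
  have hdom : (fun x => tail μ (t * x)) =O[atTop] tail μ :=
    .of_bound C (by simpa only [Real.norm_of_nonneg (tail_nonneg _)] using hC)
  have hhalf : (fun x => tail μ (x / 2)) =O[atTop] tail μ := by
    simpa only [div_eq_inv_mul] using
      antitone_tail.isBigO_comp_mul_of_isBigO_comp_mul tail_nonneg ht0 ht1 hdom (inv_pos.2 two_pos)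
  exact ⟨hL.1, hsupp, tendsto_tail_conv_self_div hsupp hL hhalf⟩
end

section
/- Let X₁, …, Xₙ be random variables that are conditionally independent given a σ-algebra G, each with distribution Fᵢ satisfying F̄ᵢ(x) ~ αᵢF̄(x) for a subexponential reference F, and satisfying Assumption D3. Then for any fixed b > 0, P(max_{1≤i≤n} cᵢXᵢ > x) ~ ∑_{i=1}^n P(cᵢXᵢ > x) as x → ∞, uniformly over (c₁, …, cₙ) ∈ [0,b]^n (with the ratio interpreted as 1 when all cᵢ = 0). -/
open MeasureTheory ProbabilityTheory Filter Topology Set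

/-- Assumption D3 of Foss–Richards (2010) with insensitivity function `h ∈ H(F)`:
there are a nondecreasing `r` and events `Bᵢ(x) ∈ G` increasing to `Ω` with
`P(Xᵢ > x | G) 1(Bᵢ(x)) ≤ r(x) F̄(x) 1(Bᵢ(x))` a.s., `P(Bᵢ(h(x))ᶜ) = o(F̄(x))`
uniformly in `i`, `r(x) F̄(h(x)) = o(1)` and
`r(x) ∫_{h(x)}^{x-h(x)} F̄(x-y) F(dy) = o(F̄(x))`. -/
def AssumptionD3 {Ω : Type*} [MeasurableSpace Ω] (P : MeasureTheory.Measure Ω)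
    (G : MeasurableSpace Ω) {ι : Type*} (X : ι → Ω → ℝ)
    (μ : MeasureTheory.Measure ℝ) (h : ℝ → ℝ) : Prop :=
  ∃ (r : ℝ → ℝ) (B : ι → ℝ → Set Ω),
    Monotone r ∧
    (∀ i x, MeasurableSet[G] (B i x)) ∧
    (∀ i, Monotone (B i)) ∧
    (∀ i, (⋃ x : ℝ, B i x) = Set.univ) ∧
    (∀ i x, ∀ᵐ ω ∂P, ω ∈ B i x →
      (P[Set.indicator {ω' | x < X i ω'} (fun _ => (1 : ℝ)) | G]) ω ≤ r x * tail μ x) ∧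
    (∀ ε : ℝ, 0 < ε → ∀ᶠ x in Filter.atTop, ∀ i,
      (P ((B i (h x))ᶜ)).toReal ≤ ε * tail μ x) ∧
    Filter.Tendsto (fun x => r x * tail μ (h x)) Filter.atTop (nhds 0) ∧
    Filter.Tendsto (fun x =>
        (r x * ∫ y in Set.Ioc (h x) (x - h x), tail μ (x - y) ∂μ) / tail μ x)
      Filter.atTop (nhds 0)

/-! By Bonferroni, `P(max cᵢXᵢ > x)` lies between `∑ P(cᵢXᵢ > x)` and that sum minus
`∑_{i ≠ j} P(cᵢXᵢ > x, cⱼXⱼ > x)`, so it suffices to make every joint exceedance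
`P(Xᵢ > s, Xⱼ > t)` at most `δ (P(Xᵢ > s) + P(Xⱼ > t))` for all large `s`, uniformly in `t`;
since `x / cᵢ ≥ x / b`, this is then uniform in the weights.
Conditioning on `G`, the joint exceedance is `E[P(Xᵢ > s | G) P(Xⱼ > t | G)]`. On `Bᵢ(h(s)) ⊆ Bᵢ(s)`
the first factor is at most `r(s) F̄(s) ≤ r(s) F̄(h(s)) → 0`, and the complement has probability
`o(F̄(s)) = o(P(Xᵢ > s))` by D2. -/

section Bonferroni

variable {Ω ι : Type*} [MeasurableSpace Ω] {P : Measure Ω} [IsFiniteMeasure P]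

theorem sum_measureReal_le_measureReal_biUnion_add [DecidableEq ι] (s : Finset ι)
    {A : ι → Set Ω} (hA : ∀ i, MeasurableSet (A i)) :
    ∑ i ∈ s, P.real (A i) ≤
      P.real (⋃ i ∈ s, A i) + ∑ i ∈ s, ∑ j ∈ s.erase i, P.real (A i ∩ A j) := by
  induction s using Finset.induction with
  | empty => simp
  | @insert a s ha ih =>
    have hunion := measureReal_union_add_inter (μ := P) (s := A a)
      (Finset.measurableSet_biUnion s fun i _ => hA i) (measure_ne_top _ _) (measure_ne_top _ _)
    have hinter : P.real (A a ∩ ⋃ i ∈ s, A i) ≤ ∑ j ∈ s, P.real (A a ∩ A j) := by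
      rw [inter_iUnion₂]
      exact measureReal_biUnion_finset_le s _
    have hpairs : ∑ i ∈ s, ∑ j ∈ s.erase i, P.real (A i ∩ A j) ≤
        ∑ i ∈ s, ∑ j ∈ (insert a s).erase i, P.real (A i ∩ A j) :=
      Finset.sum_le_sum fun i _ => Finset.sum_le_sum_of_subset_of_nonneg
        (Finset.erase_subset_erase _ (Finset.subset_insert _ _)) fun _ _ _ => measureReal_nonneg
    rw [Finset.sum_insert ha, Finset.sum_insert ha, Finset.erase_insert ha,
      Finset.set_biUnion_insert]
    linarith

theorem abs_measureReal_iUnion_sub_sum_le [Fintype ι] {A : ι → Set Ω}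
    (hA : ∀ i, MeasurableSet (A i)) {δ : ℝ} (hδ : 0 ≤ δ)
    (hpair : ∀ i j, i ≠ j → P.real (A i ∩ A j) ≤ δ * (P.real (A i) + P.real (A j))) :
    |P.real (⋃ i, A i) - ∑ i, P.real (A i)| ≤ 2 * Fintype.card ι * δ * ∑ i, P.real (A i) := by
  classical
  have hpairs : ∑ i, ∑ j ∈ Finset.univ.erase i, P.real (A i ∩ A j) ≤
      2 * Fintype.card ι * δ * ∑ i, P.real (A i) :=
    calc ∑ i, ∑ j ∈ Finset.univ.erase i, P.real (A i ∩ A j)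
        ≤ ∑ i, ∑ j, δ * (P.real (A i) + P.real (A j)) :=
          Finset.sum_le_sum fun i _ => (Finset.sum_le_sum fun j hj =>
            hpair i j (Finset.ne_of_mem_erase hj).symm).trans
            (Finset.sum_le_sum_of_subset_of_nonneg (Finset.erase_subset _ _) fun j _ _ =>
              mul_nonneg hδ (add_nonneg measureReal_nonneg measureReal_nonneg))
      _ = 2 * Fintype.card ι * δ * ∑ i, P.real (A i) := by
          simp only [← Finset.mul_sum, Finset.sum_add_distrib, Finset.sum_const,
            Finset.card_univ, nsmul_eq_mul, Finset.sum_comm (γ := ι) (f := fun _ j => P.real (A j))]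
          ring
  have hlower := sum_measureReal_le_measureReal_biUnion_add (P := P) Finset.univ hA
  simp only [Finset.mem_univ, iUnion_true] at hlower
  rw [abs_sub_comm, abs_of_nonneg (sub_nonneg.2 (measureReal_iUnion_fintype_le A))]
  linarith

end Bonferroni

theorem measureReal_inter_le_of_condExp_le {Ω : Type*} {m mΩ : MeasurableSpace Ω} (hm : m ≤ mΩ)
    {P : Measure Ω} [IsFiniteMeasure P] {A C B : Set Ω} (hA : MeasurableSet A)
    (hC : MeasurableSet C) (hB : MeasurableSet B)
    (hAC : P⟦A ∩ C | m⟧ =ᵐ[P] fun ω => (P⟦A | m⟧) ω * (P⟦C | m⟧) ω) {δ : ℝ} (hδ : 0 ≤ δ)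
    (hAB : ∀ᵐ ω ∂P, ω ∈ B → (P⟦A | m⟧) ω ≤ δ) :
    P.real (A ∩ C) ≤ δ * P.real C + P.real Bᶜ := by
  have hle_one : ∀ s : Set Ω, ∀ᵐ ω ∂P, |(P⟦s | m⟧) ω| ≤ 1 := fun s =>
    ae_bdd_abs_condExp_of_ae_bdd_abs (.of_forall fun ω => by
      by_cases hω : ω ∈ s <;> simp [hω])
  have hnonneg : ∀ s : Set Ω, 0 ≤ᵐ[P] P⟦s | m⟧ := fun s =>
    condExp_nonneg (.of_forall fun ω => indicator_nonneg (fun _ _ => zero_le_one) ω)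
  have hprod_le : (fun ω => (P⟦A | m⟧) ω * (P⟦C | m⟧) ω) ≤ᵐ[P]
      fun ω => δ * (P⟦C | m⟧) ω + Bᶜ.indicator (fun _ => (1 : ℝ)) ω := by
    filter_upwards [hle_one A, hle_one C, hnonneg C, hAB] with ω hA1 hC1 (hC0 : 0 ≤ _) hAδ
    by_cases hω : ω ∈ B
    · simpa [hω] using mul_le_mul_of_nonneg_right (hAδ hω) hC0
    · simp only [hω, not_false_eq_true, indicator_of_mem, mem_compl_iff]
      nlinarith [mul_nonneg (sub_nonneg.2 (abs_le.1 hA1).2) hC0, mul_nonneg hδ hC0,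
        (abs_le.1 hC1).2]
  calc P.real (A ∩ C) = ∫ ω, (P⟦A ∩ C | m⟧) ω ∂P := by
        rw [integral_condExp hm]; exact (integral_indicator_one (hA.inter hC)).symm
    _ = ∫ ω, (P⟦A | m⟧) ω * (P⟦C | m⟧) ω ∂P := integral_congr_ae hAC
    _ ≤ ∫ ω, δ * (P⟦C | m⟧) ω + Bᶜ.indicator (fun _ => (1 : ℝ)) ω ∂P :=
        integral_mono_ae (integrable_condExp.congr hAC)
          ((integrable_condExp.const_mul δ).add ((integrable_const 1).indicator hB.compl))
          hprod_le
    _ = δ * P.real C + P.real Bᶜ := by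
        rw [integral_add (integrable_condExp.const_mul δ)
            ((integrable_const 1).indicator hB.compl),
          integral_const_mul, integral_condExp hm, integral_indicator_const _ hC,
          integral_indicator_const _ hB.compl, smul_eq_mul, smul_eq_mul, mul_one, mul_one]

theorem tail_antitone (μ : Measure ℝ) [IsFiniteMeasure μ] : Antitone (tail μ) :=
  fun _ _ hxy => measureReal_mono (Ioi_subset_Ioi hxy)

theorem MemH.eventually_le_self {μ : Measure ℝ} {h : ℝ → ℝ} (hh : MemH μ h) :
    ∀ᶠ x in atTop, h x ≤ x := by
  filter_upwards [hh.ratio_zero.eventually (eventually_lt_nhds one_pos),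
    eventually_gt_atTop 0] with x hx hx0
  exact ((div_lt_one hx0).1 hx).le

theorem eventually_mul_tail_le {l : Filter ℝ} {μ : Measure ℝ} [IsFiniteMeasure μ]
    {h r : ℝ → ℝ} (hh : ∀ᶠ x in l, h x ≤ x)
    (hr : Tendsto (fun x => r x * tail μ (h x)) l (𝓝 0)) {δ : ℝ} (hδ : 0 < δ) :
    ∀ᶠ x in l, r x * tail μ x ≤ δ := by
  filter_upwards [hh, hr.eventually (eventually_lt_nhds hδ)] with x hx hrx
  rcases le_or_gt 0 (r x) with hr0 | hr0
  · exact (mul_le_mul_of_nonneg_left (tail_antitone μ hx) hr0).trans hrx.le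
  · exact (mul_nonpos_of_nonpos_of_nonneg hr0.le measureReal_nonneg).trans hδ.le

theorem eventually_forall_le_mul_of_tendsto_div {α ι : Type*} [Finite ι] {l : Filter α}
    {f g : ι → α → ℝ} {T : α → ℝ} {c : ι → ℝ} (hc : ∀ i, 0 < c i) (hT : ∀ a, 0 ≤ T a)
    (hg : ∀ i, Tendsto (fun a => g i a / T a) l (𝓝 (c i)))
    (hf : ∀ ε, 0 < ε → ∀ᶠ a in l, ∀ i, f i a ≤ ε * T a) {δ : ℝ} (hδ : 0 < δ) :
    ∀ᶠ a in l, ∀ i, f i a ≤ δ * g i a := by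
  rw [eventually_all]
  intro i
  filter_upwards [hf (δ * (c i / 2)) (by have := hc i; positivity),
    (hg i).eventually (eventually_gt_nhds (half_lt_self (hc i)))] with a hfa hga
  -- `g / 0 = 0` would lie below `c / 2`
  have hTa : 0 < T a := (hT a).lt_of_ne fun h0 => by
    simp only [← h0, div_zero] at hga
    linarith [hc i]
  calc f i a ≤ δ * (c i / 2) * T a := hfa i
    _ ≤ δ * g i a := by
        rw [mul_assoc]
        exact mul_le_mul_of_nonneg_left ((lt_div_iff₀ hTa).1 hga).le hδ.le

theorem AssumptionD3.eventually_measureReal_inter_le {Ω ι : Type*} [Finite ι]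
    {G mΩ : MeasurableSpace Ω} [StandardBorelSpace Ω] (hG : G ≤ mΩ) {P : Measure Ω}
    [IsFiniteMeasure P] {μ : Measure ℝ} [IsFiniteMeasure μ] {X : ι → Ω → ℝ}
    {h : ℝ → ℝ} (hD3 : AssumptionD3 P G X μ h) (hXmeas : ∀ i, Measurable (X i))
    (hD1 : iCondIndepFun G hG X P) {α : ι → ℝ} (hα : ∀ i, 0 < α i)
    (hD2 : ∀ i, Tendsto (fun x => P.real {ω | x < X i ω} / tail μ x) atTop (𝓝 (α i)))
    (hh : ∀ᶠ x in atTop, h x ≤ x) {δ : ℝ} (hδ : 0 < δ) :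
    ∀ᶠ s in atTop, ∀ t, ∀ i j, i ≠ j →
      P.real (X i ⁻¹' Ioi s ∩ X j ⁻¹' Ioi t) ≤
        δ * (P.real (X i ⁻¹' Ioi s) + P.real (X j ⁻¹' Ioi t)) := by
  obtain ⟨r, B, -, hBmeas, hBmono, -, hcond, hBsmall, hr, -⟩ := hD3
  have hBc : ∀ᶠ s in atTop, ∀ i, P.real (B i (h s))ᶜ ≤ δ * P.real (X i ⁻¹' Ioi s) :=
    eventually_forall_le_mul_of_tendsto_div hα (fun _ => measureReal_nonneg) hD2
      (fun ε hε => (hBsmall ε hε).mono fun _ hs i => hs i) hδ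
  filter_upwards [hh, eventually_mul_tail_le hh hr hδ, hBc] with s hhs hrs hBcs t i j hij
  have hmul := (condIndepFun_iff_condExp_inter_preimage_eq_mul (hXmeas i) (hXmeas j)).1
    (hD1.condIndepFun hij) (Ioi s) (Ioi t) measurableSet_Ioi measurableSet_Ioi
  have hcond_le : ∀ᵐ ω ∂P, ω ∈ B i s → (P⟦X i ⁻¹' Ioi s | G⟧) ω ≤ δ := by
    filter_upwards [hcond i s] with ω hω hωB
    exact (hω hωB).trans hrs
  have hBcompl : P.real (B i s)ᶜ ≤ P.real (B i (h s))ᶜ :=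
    measureReal_mono (compl_subset_compl.2 (hBmono i hhs))
  have hinter := measureReal_inter_le_of_condExp_le hG (hXmeas i measurableSet_Ioi)
    (hXmeas j measurableSet_Ioi) (hG _ (hBmeas i s)) hmul hδ.le hcond_le
  linarith [hBcs i]

theorem setOf_lt_mul_eq_preimage_Ioi {Ω : Type*} {X : Ω → ℝ} {x c : ℝ} (hc : 0 < c) :
    {ω | x < c * X ω} = X ⁻¹' Ioi (x / c) := by
  ext ω
  simp [div_lt_iff₀ hc, mul_comm]

theorem eventually_measureReal_inter_setOf_lt_mul_le {Ω ι : Type*} [MeasurableSpace Ω]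
    {P : Measure Ω} {X : ι → Ω → ℝ} {δ : ℝ} (hδ : 0 ≤ δ)
    (hpair : ∀ᶠ s in atTop, ∀ t, ∀ i j, i ≠ j →
      P.real (X i ⁻¹' Ioi s ∩ X j ⁻¹' Ioi t) ≤
        δ * (P.real (X i ⁻¹' Ioi s) + P.real (X j ⁻¹' Ioi t))) (b : ℝ) :
    ∀ᶠ x in atTop, ∀ c : ι → ℝ, (∀ i, c i ∈ Icc 0 b) → ∀ i j, i ≠ j →
      P.real ({ω | x < c i * X i ω} ∩ {ω | x < c j * X j ω}) ≤
        δ * (P.real {ω | x < c i * X i ω} + P.real {ω | x < c j * X j ω}) := by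
  obtain ⟨s₀, hs₀⟩ := eventually_atTop.1 hpair
  filter_upwards [eventually_ge_atTop (b * max s₀ 0), eventually_ge_atTop 0]
    with x hxb hx0 c hc i j hij
  have hzero : ∀ k, c k = 0 → {ω | x < c k * X k ω} = ∅ := fun k hk => by
    ext ω
    simp [hk, hx0]
  have hlarge : ∀ k, 0 < c k → s₀ ≤ x / c k := fun k hk => by
    rw [le_div_iff₀ hk]
    nlinarith [le_max_left s₀ 0, le_max_right s₀ 0, (hc k).2]
  rcases (hc i).1.eq_or_lt with hci | hci
  · rw [hzero i hci.symm, empty_inter, measureReal_empty]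
    positivity
  rcases (hc j).1.eq_or_lt with hcj | hcj
  · rw [hzero j hcj.symm, inter_empty, measureReal_empty]
    positivity
  rw [setOf_lt_mul_eq_preimage_Ioi hci, setOf_lt_mul_eq_preimage_Ioi hcj]
  exact hs₀ _ (hlarge i hci) _ i j hij

theorem weighted_max_uniform_asymptotics_general
    {Ω : Type*} (G : MeasurableSpace Ω) [mΩ : MeasurableSpace Ω] [StandardBorelSpace Ω]
    (P : MeasureTheory.Measure Ω) [MeasureTheory.IsProbabilityMeasure P]
    (hG : G ≤ mΩ)
    (μ : MeasureTheory.Measure ℝ) [MeasureTheory.IsProbabilityMeasure μ]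
    (n : ℕ) (X : Fin n → Ω → ℝ) (hXmeas : ∀ i, Measurable (X i))
    (hD1 : ProbabilityTheory.iCondIndepFun (mΩ := mΩ) G hG X P)
    (α : Fin n → ℝ) (hα : ∀ i, 0 < α i)
    (hD2 : ∀ i, Filter.Tendsto
      (fun x => (P {ω | x < X i ω}).toReal / tail μ x) Filter.atTop (nhds (α i)))
    (h : ℝ → ℝ) (hmemH : MemH μ h) (hD3 : AssumptionD3 P G X μ h)
    (b : ℝ) :
    ∀ ε : ℝ, 0 < ε → ∀ᶠ x in Filter.atTop, ∀ c : Fin n → ℝ,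
      (∀ i, c i ∈ Set.Icc 0 b) →
      |(P {ω | ∃ i, x < c i * X i ω}).toReal
          - ∑ i, (P {ω | x < c i * X i ω}).toReal|
        ≤ ε * ∑ i, (P {ω | x < c i * X i ω}).toReal := by
  intro ε hε
  set δ := ε / (2 * n + 1)
  have hδ : 0 < δ := by positivity
  have hnδ : 2 * n * δ ≤ ε := by
    rw [mul_div_assoc', div_le_iff₀ (by positivity)]
    nlinarith
  have hpair := hD3.eventually_measureReal_inter_le hG hXmeas hD1 hα hD2
    hmemH.eventually_le_self hδ
  filter_upwards [eventually_measureReal_inter_setOf_lt_mul_le hδ.le hpair b] with x hx c hc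
  have hunion : {ω | ∃ i, x < c i * X i ω} = ⋃ i, {ω | x < c i * X i ω} := by
    ext ω
    simp
  have hbonf := abs_measureReal_iUnion_sub_sum_le
    (fun i => measurableSet_lt measurable_const ((hXmeas i).const_mul (c i))) hδ.le (hx c hc)
  rw [Fintype.card_fin] at hbonf
  rw [hunion]
  calc _ ≤ _ := hbonf
    _ ≤ _ := mul_le_mul_of_nonneg_right hnδ (Finset.sum_nonneg fun _ _ => measureReal_nonneg)

/-- Uniform asymptotics for the weighted maximum of conditionally independent
random variables with subexponential reference distribution:
`P(max cᵢXᵢ > x) ~ ∑ P(cᵢXᵢ > x)` uniformly over `(c₁,…,cₙ) ∈ [0,b]^n`. -/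
theorem weighted_max_uniform_asymptotics
    {Ω : Type*} (G : MeasurableSpace Ω) [mΩ : MeasurableSpace Ω] [StandardBorelSpace Ω]
    (P : MeasureTheory.Measure Ω) [MeasureTheory.IsProbabilityMeasure P]
    (hG : G ≤ mΩ)
    (μ : MeasureTheory.Measure ℝ) [MeasureTheory.IsProbabilityMeasure μ]
    (hS : Subexponential μ)
    (n : ℕ) (X : Fin n → Ω → ℝ) (hXmeas : ∀ i, Measurable (X i))
    (hD1 : ProbabilityTheory.iCondIndepFun (mΩ := mΩ) G hG X P)
    (α : Fin n → ℝ) (hα : ∀ i, 0 < α i)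
    (hD2 : ∀ i, Filter.Tendsto
      (fun x => (P {ω | x < X i ω}).toReal / tail μ x) Filter.atTop (nhds (α i)))
    (h : ℝ → ℝ) (hmemH : MemH μ h) (hD3 : AssumptionD3 P G X μ h)
    (b : ℝ) (hb : 0 < b) :
    ∀ ε : ℝ, 0 < ε → ∀ᶠ x in Filter.atTop, ∀ c : Fin n → ℝ,
      (∀ i, c i ∈ Set.Icc 0 b) →
      |(P {ω | ∃ i, x < c i * X i ω}).toReal
          - ∑ i, (P {ω | x < c i * X i ω}).toReal|
        ≤ ε * ∑ i, (P {ω | x < c i * X i ω}).toReal :=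
  weighted_max_uniform_asymptotics_general G (mΩ := mΩ) P hG μ n X hXmeas hD1 α hα hD2 h hmemH hD3 b
end

section
/- If a nonnegative random variable S has a long-tailed distribution and W is an independent nonnegative random variable, then P(S > x + W) ~ P(S > x) as x → ∞. -/
open MeasureTheory ProbabilityTheory Filter Topology Set

/-! Since `W ≥ 0`, `P(S > x + W) ≤ P(S > x)`. Conversely, for a fixed level `y`, independence gives
`P(S > x + W) ≥ P(S > x + y) P(W ≤ y)`; by long-tailedness the right-hand side is asymptotically
`P(S > x) P(W ≤ y)`, and `P(W ≤ y)` is as close to `1` as we like for `y` large. -/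

section

variable {Ω : Type*} [MeasurableSpace Ω] (P : Measure Ω)

lemma tendsto_measureReal_setOf_le_atTop [IsProbabilityMeasure P] (W : Ω → ℝ) :
    Tendsto (fun y => P.real {ω | W ω ≤ y}) atTop (𝓝 1) := by
  have hmono : Monotone fun y : ℝ => {ω | W ω ≤ y} := fun _ _ hyz _ hω => le_trans hω hyz
  have hunion : ⋃ y : ℝ, {ω | W ω ≤ y} = univ :=
    eq_univ_of_forall fun ω => mem_iUnion.2 ⟨W ω, le_refl (W ω)⟩
  have h := tendsto_measure_iUnion_atTop (μ := P) hmono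
  rw [hunion, measure_univ] at h
  exact (ENNReal.tendsto_toReal ENNReal.one_ne_top).comp h

lemma measureReal_setOf_add_lt_le [IsFiniteMeasure P] (S W : Ω → ℝ)
    (hW : ∀ ω, 0 ≤ W ω) (x : ℝ) :
    P.real {ω | x + W ω < S ω} ≤ P.real {ω | x < S ω} :=
  measureReal_mono fun ω hω => (le_add_of_nonneg_right (hW ω)).trans_lt hω

lemma ProbabilityTheory.IndepFun.measureReal_add_lt_mul_le [IsFiniteMeasure P] {S W : Ω → ℝ}
    (hindep : IndepFun S W P) (x y : ℝ) :
    P.real {ω | x + y < S ω} * P.real {ω | W ω ≤ y} ≤ P.real {ω | x + W ω < S ω} := by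
  have hsub : S ⁻¹' Ioi (x + y) ∩ W ⁻¹' Iic y ⊆ {ω | x + W ω < S ω} := fun ω ⟨hS, hW⟩ =>
    (add_le_add_right (mem_Iic.1 hW) x).trans_lt hS
  calc P.real {ω | x + y < S ω} * P.real {ω | W ω ≤ y}
      = P.real (S ⁻¹' Ioi (x + y) ∩ W ⁻¹' Iic y) := by
        simp only [measureReal_def, ← ENNReal.toReal_mul]
        rw [hindep.measure_inter_preimage_eq_mul _ _ measurableSet_Ioi measurableSet_Iic]
        rfl
    _ ≤ _ := measureReal_mono hsub

end

theorem longTailed_shift_by_independent_general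
    {Ω : Type*} [MeasurableSpace Ω] (P : Measure Ω) [IsProbabilityMeasure P]
    (S W : Ω → ℝ)
    (hWnonneg : ∀ ω, 0 ≤ W ω)
    (hindep : IndepFun S W P)
    (hpos : ∀ x : ℝ, 0 < P {ω | x < S ω})
    (hlong : ∀ y : ℝ, 0 ≤ y → Filter.Tendsto
      (fun x => (P {ω | x + y < S ω}).toReal / (P {ω | x < S ω}).toReal)
      Filter.atTop (nhds 1)) :
    Filter.Tendsto
      (fun x => (P {ω | x + W ω < S ω}).toReal / (P {ω | x < S ω}).toReal)
      Filter.atTop (nhds 1) := by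
  have hb (x : ℝ) : 0 < P.real {ω | x < S ω} :=
    ENNReal.toReal_pos (hpos x).ne' (measure_ne_top _ _)
  refine tendsto_order.2 ⟨fun c hc => ?_, fun c hc => Eventually.of_forall fun x => ?_⟩
  · obtain ⟨y, hy, hcy⟩ : ∃ y, 0 ≤ y ∧ c < P.real {ω | W ω ≤ y} :=
      ((eventually_ge_atTop 0).and
        ((tendsto_measureReal_setOf_le_atTop P W).eventually_const_lt hc)).exists
    have hlim := ((hlong y hy).mul_const (P.real {ω | W ω ≤ y})).eventually_const_lt
      (by rwa [one_mul])
    filter_upwards [hlim] with x hx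
    calc c < _ := hx
      _ = P.real {ω | x + y < S ω} * P.real {ω | W ω ≤ y} / P.real {ω | x < S ω} :=
          div_mul_eq_mul_div _ _ _
      _ ≤ _ := div_le_div_of_nonneg_right (hindep.measureReal_add_lt_mul_le P x y) (hb x).le
  · exact (div_le_one_of_le₀ (measureReal_setOf_add_lt_le P S W hWnonneg x) (hb x).le).trans_lt hc

/-- If `S` has a long-tailed distribution and `W ≥ 0` is independent of `S`, then
`P(S > x + W) ~ P(S > x)` as `x → ∞`. -/
theorem longTailed_shift_by_independent
    {Ω : Type*} [MeasurableSpace Ω] (P : Measure Ω) [IsProbabilityMeasure P]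
    (S W : Ω → ℝ) (hSmeas : Measurable S) (hWmeas : Measurable W)
    (hSnonneg : ∀ ω, 0 ≤ S ω) (hWnonneg : ∀ ω, 0 ≤ W ω)
    (hindep : IndepFun S W P)
    (hpos : ∀ x : ℝ, 0 < P {ω | x < S ω})
    (hlong : ∀ y : ℝ, 0 ≤ y → Filter.Tendsto
      (fun x => (P {ω | x + y < S ω}).toReal / (P {ω | x < S ω}).toReal)
      Filter.atTop (nhds 1)) :
    Filter.Tendsto
      (fun x => (P {ω | x + W ω < S ω}).toReal / (P {ω | x < S ω}).toReal)
      Filter.atTop (nhds 1) :=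
  longTailed_shift_by_independent_general P S W hWnonneg hindep hpos hlong
end
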